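/- For a finite graph G with at least one edge, the vertex cover LP integrality gap ρ(G) equals 1 (i.e., P(G) has integral optimal solutions for every nonnegative cost) if and only if G is bipartite. -/

import Mathlib

open Finset

def IsVC {V : Type*} (G : SimpleGraph V) (S : Set V) : Prop :=
  ∀ ⦃u v⦄, G.Adj u v → u ∈ S ∨ v ∈ S

def IsIndep {V : Type*} (G : SimpleGraph V) (S : Set V) : Prop :=
  ∀ ⦃u⦄, u ∈ S → ∀ ⦃v⦄, v ∈ S → ¬ G.Adj u v

def lpPoly {V : Type*} (G : SimpleGraph V) : Set (V → ℝ) :=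
  {x | (∀ v, 0 ≤ x v) ∧ ∀ ⦃u v⦄, G.Adj u v → 1 ≤ x u + x v}

/-- Optimal value of the fractional coloring LP of the subgraph of `G` induced on `s`:
weights on independent sets contained in `s` covering every vertex of `s`. -/
noncomputable def fracChromOn {V : Type*} [Fintype V] [DecidableEq V]
    (G : SimpleGraph V) (s : Set V) : ℝ :=
  sInf {t | ∃ y : Finset V → ℝ, (∀ U, 0 ≤ y U) ∧
    (∀ U, y U ≠ 0 → IsIndep G ↑U ∧ ↑U ⊆ s) ∧
    (∀ v ∈ s, 1 ≤ ∑ U : Finset V, if v ∈ U then y U else 0) ∧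
    t = ∑ U : Finset V, y U}

/-- Fractional chromatic number of `G`. -/
noncomputable def fracChrom {V : Type*} [Fintype V] [DecidableEq V]
    (G : SimpleGraph V) : ℝ :=
  fracChromOn G Set.univ

/-- Optimal value of the vertex cover LP relaxation under cost `c`. -/
noncomputable def lpVal {V : Type*} [Fintype V] (G : SimpleGraph V) (c : V → ℝ) : ℝ :=
  sInf {t | ∃ x ∈ lpPoly G, t = ∑ v, c v * x v}

/-- Minimum cost of an integral vertex cover under cost `c`. -/
noncomputable def ipVal {V : Type*} [Fintype V] [DecidableEq V]
    (G : SimpleGraph V) (c : V → ℝ) : ℝ :=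
  sInf {t | ∃ S : Finset V, IsVC G ↑S ∧ t = ∑ v ∈ S, c v}

/-- Integrality gap of the vertex cover LP relaxation. -/
noncomputable def gap {V : Type*} [Fintype V] [DecidableEq V] (G : SimpleGraph V) : ℝ :=
  sSup {r | ∃ c : V → ℝ, (∀ v, 0 ≤ c v) ∧ 0 < lpVal G c ∧ r = ipVal G c / lpVal G c}


/-!
If `G` is bipartite, randomized threshold rounding shows that the LP and the integral optimum agree
for every cost. Otherwise `G` has an odd closed walk, and charging each vertex its number of visits
gives a cost with LP optimum `ℓ / 2` but integral optimum at least `(ℓ + 1) / 2`.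
-/

open MeasureTheory unitInterval

section Values

variable {V : Type*} {G : SimpleGraph V} {c : V → ℝ}

lemma indicator_mem_lpPoly [DecidableEq V] {S : Finset V} (hS : IsVC G S) :
    (fun v => if v ∈ S then (1 : ℝ) else 0) ∈ lpPoly G := by
  refine ⟨fun v => by positivity, fun u v huv => ?_⟩
  rcases hS huv with h | h <;> simp only [mem_coe] at h <;> simp only [h, if_true] <;>
    split_ifs <;> norm_num

lemma const_half_mem_lpPoly : (fun _ => 1 / 2 : V → ℝ) ∈ lpPoly G :=
  ⟨fun _ => by norm_num, fun _ _ _ => by norm_num⟩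

variable [Fintype V]

lemma lpVal_le_of_mem_lpPoly (hc : ∀ v, 0 ≤ c v) {x : V → ℝ} (hx : x ∈ lpPoly G) :
    lpVal G c ≤ ∑ v, c v * x v := by
  refine csInf_le ⟨0, ?_⟩ ⟨x, hx, rfl⟩
  rintro _ ⟨y, hy, rfl⟩
  exact sum_nonneg fun v _ => mul_nonneg (hc v) (hy.1 v)

lemma le_lpVal {b : ℝ} (h : ∀ x ∈ lpPoly G, b ≤ ∑ v, c v * x v) : b ≤ lpVal G c := by
  refine le_csInf ⟨_, 1, ⟨fun _ => zero_le_one, fun _ _ _ => by norm_num⟩, rfl⟩ ?_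
  rintro _ ⟨x, hx, rfl⟩
  exact h x hx

variable [DecidableEq V]

lemma ipVal_le_of_isVC (hc : ∀ v, 0 ≤ c v) {S : Finset V} (hS : IsVC G S) :
    ipVal G c ≤ ∑ v ∈ S, c v := by
  refine csInf_le ⟨0, ?_⟩ ⟨S, hS, rfl⟩
  rintro _ ⟨T, -, rfl⟩
  exact sum_nonneg fun v _ => hc v

lemma le_ipVal {b : ℝ} (h : ∀ S : Finset V, IsVC G S → b ≤ ∑ v ∈ S, c v) :
    b ≤ ipVal G c := by
  refine le_csInf ⟨_, univ, fun u _ _ => Or.inl (mem_univ u), rfl⟩ ?_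
  rintro _ ⟨S, hS, rfl⟩
  exact h S hS

lemma lpVal_le_ipVal (hc : ∀ v, 0 ≤ c v) : lpVal G c ≤ ipVal G c :=
  le_ipVal fun S hS =>
    (lpVal_le_of_mem_lpPoly hc (indicator_mem_lpPoly hS)).trans_eq (by simp [mul_ite])

lemma ipVal_le_two_mul_lpVal (hc : ∀ v, 0 ≤ c v) : ipVal G c ≤ 2 * lpVal G c := by
  rw [← div_le_iff₀' two_pos]
  refine le_lpVal fun x hx => ?_
  let S : Finset V := {v | 1 / 2 ≤ x v}
  have hS : IsVC G S := fun u v huv => by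
    by_contra! h
    simp only [S, coe_filter, mem_univ, true_and, Set.mem_ofPred_eq, not_le] at h
    linarith [hx.2 huv]
  rw [div_le_iff₀' two_pos, mul_sum]
  calc ipVal G c ≤ ∑ v ∈ S, c v := ipVal_le_of_isVC hc hS
    _ ≤ ∑ v ∈ S, 2 * (c v * x v) := sum_le_sum fun v hv => by
        have : 1 / 2 ≤ x v := (mem_filter.1 hv).2
        nlinarith [hc v]
    _ ≤ ∑ v, 2 * (c v * x v) :=
        sum_le_sum_of_subset_of_nonneg (subset_univ S) fun v _ _ =>
          mul_nonneg two_pos.le (mul_nonneg (hc v) (hx.1 v))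

end Values

section Rounding

variable {V : Type*} [Fintype V] [DecidableEq V] {G : SimpleGraph V} {c : V → ℝ}

lemma ipVal_le_sum_mul_measureReal {Θ : Type*} [MeasurableSpace Θ] (μ : Measure Θ)
    [IsProbabilityMeasure μ] (hc : ∀ v, 0 ≤ c v) (S : Θ → Finset V) (hS : ∀ θ, IsVC G (S θ))
    (hmeas : ∀ v, MeasurableSet {θ | v ∈ S θ}) :
    ipVal G c ≤ ∑ v, c v * μ.real {θ | v ∈ S θ} := by
  have hcost : ∀ θ, ∑ v ∈ S θ, c v = ∑ v, c v * {θ | v ∈ S θ}.indicator 1 θ := fun θ => by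
    simp [Set.indicator_apply, mul_ite]
  have hint : ∀ v, Integrable (fun θ => c v * {θ | v ∈ S θ}.indicator 1 θ) μ := fun v =>
    ((integrable_const 1).indicator (hmeas v)).const_mul (c v)
  obtain ⟨θ, hθ⟩ := exists_le_integral (integrable_finsetSum _ fun v _ => hint v)
  rw [integral_finsetSum _ fun v _ => hint v] at hθ
  simp only [integral_const_mul, integral_indicator_one (hmeas _)] at hθ
  exact (ipVal_le_of_isVC hc (hS θ)).trans ((hcost θ).trans_le hθ)

lemma volume_setOf_coe_le_le (a : ℝ) :
    volume {θ : I | (θ : ℝ) ≤ a} ≤ ENNReal.ofReal a := by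
  rw [volume_apply]
  calc volume (Subtype.val '' {θ : I | (θ : ℝ) ≤ a}) ≤ volume (Set.Icc 0 a) :=
        measure_mono (by rintro _ ⟨θ, hθ, rfl⟩; exact ⟨θ.2.1, hθ⟩)
    _ = ENNReal.ofReal a := by simp

lemma volume_setOf_le_coe_le (a : ℝ) :
    volume {θ : I | 1 - a ≤ (θ : ℝ)} ≤ ENNReal.ofReal a := by
  rw [volume_apply]
  calc volume (Subtype.val '' {θ : I | 1 - a ≤ (θ : ℝ)})
        ≤ volume (Set.Icc (1 - a) 1) :=
        measure_mono (by rintro _ ⟨θ, hθ, rfl⟩; exact ⟨hθ, θ.2.2⟩)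
    _ = ENNReal.ofReal a := by simp

/-- Randomized threshold rounding: for `θ` uniform in `[0, 1]`, take the vertices `v ∈ A` with
`θ ≤ x v` and the vertices `v ∉ A` with `1 - x v ≤ θ`. Each `v` is taken with probability at most
`x v`, and an edge `uv` with `u ∈ A` is covered since `x u < θ` forces `1 - x v ≤ x u ≤ θ`. -/
lemma ipVal_le_lpVal_of_isIndep (hc : ∀ v, 0 ≤ c v) {A : Set V} (hA : IsIndep G A)
    (hAc : IsIndep G Aᶜ) : ipVal G c ≤ lpVal G c := by
  classical
  refine le_lpVal fun x hx => ?_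
  let S : I → Finset V := fun θ => {v | if v ∈ A then (θ : ℝ) ≤ x v else 1 - x v ≤ θ}
  have hmem : ∀ θ v, v ∈ S θ ↔ if v ∈ A then (θ : ℝ) ≤ x v else 1 - x v ≤ θ := by
    simp [S]
  have hcover : ∀ θ {u v}, G.Adj u v → u ∈ A → v ∉ A → u ∈ S θ ∨ v ∈ S θ := by
    intro θ u v huv hu hv
    simp only [hmem, hu, hv, if_true, if_false]
    by_contra! h
    linarith [hx.2 huv]
  have hS : ∀ θ, IsVC G (S θ) := by
    intro θ u v huv
    by_cases hu : u ∈ A <;> by_cases hv : v ∈ A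
    · exact absurd huv (hA hu hv)
    · exact hcover θ huv hu hv
    · exact (hcover θ huv.symm hv hu).symm
    · exact absurd huv (hAc hu hv)
  have hmeas : ∀ v, MeasurableSet {θ | v ∈ S θ} := by
    intro v
    simp only [hmem]
    split_ifs
    · exact measurableSet_le measurable_subtype_coe measurable_const
    · exact measurableSet_le measurable_const measurable_subtype_coe
  have hprob : ∀ v, volume.real {θ | v ∈ S θ} ≤ x v := by
    intro v
    refine ENNReal.toReal_le_of_le_ofReal (hx.1 v) ?_
    simp only [hmem]
    split_ifs
    · exact volume_setOf_coe_le_le _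
    · exact volume_setOf_le_coe_le _
  calc ipVal G c ≤ ∑ v, c v * volume.real {θ | v ∈ S θ} :=
        ipVal_le_sum_mul_measureReal volume hc S hS hmeas
    _ ≤ ∑ v, c v * x v :=
        sum_le_sum fun v _ => mul_le_mul_of_nonneg_left (hprob v) (hc v)

end Rounding

namespace SimpleGraph.Walk

variable {V : Type*} {G : SimpleGraph V}

/-- The final vertex `p.getVert p.length` is not counted, so on a closed walk every visit is
counted once. -/
def visitCount [DecidableEq V] {u v : V} (p : G.Walk u v) (w : V) : ℕ :=
  #{i ∈ range p.length | p.getVert i = w}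

lemma sum_visitCount_mul [Fintype V] [DecidableEq V] {u v : V} (p : G.Walk u v) (y : V → ℝ) :
    ∑ w, (p.visitCount w : ℝ) * y w = ∑ i ∈ range p.length, y (p.getVert i) := by
  rw [← sum_fiberwise (range p.length) p.getVert]
  refine sum_congr rfl fun w _ => ?_
  rw [visitCount, ← nsmul_eq_mul, ← sum_const]
  exact sum_congr rfl fun i hi => by rw [(mem_filter.1 hi).2]

lemma length_le_two_mul_sum_getVert {u : V} (p : G.Walk u u) {y : V → ℝ}
    (hy : ∀ ⦃a b⦄, G.Adj a b → 1 ≤ y a + y b) :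
    (p.length : ℝ) ≤ 2 * ∑ i ∈ range p.length, y (p.getVert i) := by
  have hshift : ∑ i ∈ range p.length, y (p.getVert (i + 1)) =
      ∑ i ∈ range p.length, y (p.getVert i) := by
    have := sum_range_succ' (fun i => y (p.getVert i)) p.length
    rw [sum_range_succ, p.getVert_length, p.getVert_zero] at this
    linarith
  calc (p.length : ℝ) = ∑ _i ∈ range p.length, (1 : ℝ) := by simp
    _ ≤ ∑ i ∈ range p.length, (y (p.getVert i) + y (p.getVert (i + 1))) :=
        sum_le_sum fun i hi => hy (p.adj_getVert_succ (mem_range.1 hi))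
    _ = 2 * ∑ i ∈ range p.length, y (p.getVert i) := by rw [sum_add_distrib, hshift]; ring

lemma length_lt_two_mul_card_getVert_mem [DecidableEq V] {u : V} (p : G.Walk u u)
    (hp : Odd p.length) {S : Finset V} (hS : IsVC G S) :
    p.length < 2 * #{i ∈ range p.length | p.getVert i ∈ S} := by
  have h := p.length_le_two_mul_sum_getVert (indicator_mem_lpPoly hS).2
  rw [sum_boole] at h
  have : p.length ≤ 2 * #{i ∈ range p.length | p.getVert i ∈ S} := by exact_mod_cast h
  obtain ⟨k, hk⟩ := hp
  omega

end SimpleGraph.Walk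

section Gap

variable {V : Type*} [Fintype V] [DecidableEq V] {G : SimpleGraph V}

def gapRatios (G : SimpleGraph V) : Set ℝ :=
  {r | ∃ c : V → ℝ, (∀ v, 0 ≤ c v) ∧ 0 < lpVal G c ∧ r = ipVal G c / lpVal G c}

lemma gap_eq_sSup_gapRatios : gap G = sSup (gapRatios G) := rfl

lemma bddAbove_gapRatios : BddAbove (gapRatios G) := by
  refine ⟨2, ?_⟩
  rintro _ ⟨c, hc, hpos, rfl⟩
  exact (div_le_iff₀ hpos).2 (ipVal_le_two_mul_lpVal hc)

/-- The LP optimum is attained at `x ≡ 1 / 2`; a vertex cover contains an endpoint of every step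
of the walk, so by parity it meets more than half of its visits. -/
lemma one_lt_gap_of_odd_length {u : V} (p : G.Walk u u) (hp : Odd p.length) : 1 < gap G := by
  let c : V → ℝ := fun w => p.visitCount w
  have hc : ∀ v, 0 ≤ c v := fun v => Nat.cast_nonneg _
  have hlp_le : lpVal G c ≤ p.length / 2 := by
    refine (lpVal_le_of_mem_lpPoly hc const_half_mem_lpPoly).trans_eq ?_
    rw [p.sum_visitCount_mul]
    simp [div_eq_mul_inv]
  have hlp_ge : (p.length : ℝ) / 2 ≤ lpVal G c := le_lpVal fun x hx => by
    rw [p.sum_visitCount_mul]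
    linarith [p.length_le_two_mul_sum_getVert hx.2]
  have hip_ge : ((p.length : ℝ) + 1) / 2 ≤ ipVal G c := le_ipVal fun S hS => by
    have hsum : ∑ v ∈ S, c v = #{i ∈ range p.length | p.getVert i ∈ S} := by
      rw [← sum_boole, ← p.sum_visitCount_mul (fun v => if v ∈ S then 1 else 0)]
      simp [c, mul_ite]
    have := p.length_lt_two_mul_card_getVert_mem hp hS
    rw [hsum, div_le_iff₀ two_pos]
    exact_mod_cast (by omega : p.length + 1 ≤ #{i ∈ range p.length | p.getVert i ∈ S} * 2)
  have hpos : 0 < lpVal G c := by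
    have : (1 : ℝ) ≤ p.length := by exact_mod_cast hp.pos
    linarith
  refine lt_of_lt_of_le ?_ (le_csSup bddAbove_gapRatios ⟨c, hc, hpos, rfl⟩)
  rw [one_lt_div hpos]
  linarith

lemma gap_eq_one_of_isIndep (hE : ∃ u v, G.Adj u v) {A : Set V} (hA : IsIndep G A)
    (hAc : IsIndep G Aᶜ) : gap G = 1 := by
  have hratio : ∀ c : V → ℝ, (∀ v, 0 ≤ c v) → 0 < lpVal G c → ipVal G c / lpVal G c = 1 :=
    fun c hc hpos => by
      rw [le_antisymm (ipVal_le_lpVal_of_isIndep hc hA hAc) (lpVal_le_ipVal hc),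
        div_self hpos.ne']
  obtain ⟨u, v, huv⟩ := hE
  have hpos : 0 < lpVal G 1 := by
    refine lt_of_lt_of_le one_pos (le_lpVal fun x hx => ?_)
    have := sum_le_sum_of_subset_of_nonneg (subset_univ {u, v}) fun w _ _ => hx.1 w
    rw [sum_pair (G.ne_of_adj huv)] at this
    simpa using (hx.2 huv).trans this
  have : gapRatios G = {1} := by
    refine Set.eq_singleton_iff_unique_mem.2 ⟨⟨1, fun _ => zero_le_one, hpos, ?_⟩, ?_⟩
    · exact (hratio 1 (fun _ => zero_le_one) hpos).symm
    · rintro _ ⟨c, hc, hpos, rfl⟩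
      exact hratio c hc hpos
  rw [gap_eq_sSup_gapRatios, this, csSup_singleton]

end Gap

lemma SimpleGraph.exists_odd_length_of_not_isIndep {V : Type*} {G : SimpleGraph V}
    (h : ¬ ∃ A : Set V, IsIndep G A ∧ IsIndep G Aᶜ) : ∃ u, ∃ p : G.Walk u u, Odd p.length := by
  by_contra! hodd
  obtain ⟨C⟩ :=
    two_colorable_iff_forall_loop_even.2 fun u p => Nat.not_odd_iff_even.1 (hodd u p)
  refine h ⟨{v | C v = 0}, fun u hu v hv huv => C.valid huv (hu.trans hv.symm),
    fun u hu v hv huv => C.valid huv ?_⟩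
  simp only [Set.mem_compl_iff, Set.mem_ofPred_eq] at hu hv
  omega

/-- The vertex cover LP integrality gap equals `1` iff the graph is bipartite. -/
theorem stmt11 {V : Type*} [Fintype V] [DecidableEq V] (G : SimpleGraph V)
    (hE : ∃ u v, G.Adj u v) :
    gap G = 1 ↔ ∃ A : Set V, IsIndep G A ∧ IsIndep G Aᶜ := by
  refine ⟨fun hgap => ?_, fun ⟨A, hA, hAc⟩ => gap_eq_one_of_isIndep hE hA hAc⟩
  by_contra hbip
  obtain ⟨u, p, hp⟩ := G.exists_odd_length_of_not_isIndep hbip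
  exact (one_lt_gap_of_odd_length p hp).ne' hgap
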